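/- arXiv:2305.17239 — 3 statements merged into one kernel-verified Lean document; each statement's English description precedes it below -/
import Mathlib

section
/- Let P = (P_1, P_2, P_3) be a partition of T into three simply connected districts, let i ∈ {1,2,3}, and let v ∈ P_i. If the i-neighborhood of v is connected and has at most 5 elements, then P_i \ {v} is simply connected. -/
namespace Redistrict

/-!
Common definitions: the triangular lattice `G_Δ`, the triangular region `T` of side
length `n`, simply connected sets, partitions into three simply connected districts,
recombination moves, the state space `Ω` and the graph `G_Ω`.
-/

/-- The infinite triangular lattice graph `G_Δ` on `ℤ²`: two vertices are adjacent iff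
their difference is one of `(1,0),(-1,0),(0,1),(0,-1),(1,-1),(-1,1)`. -/
def TriLattice : SimpleGraph (ℤ × ℤ) :=
  SimpleGraph.fromRel (fun v w => v - w = (1, 0) ∨ v - w = (0, 1) ∨ v - w = (1, -1))

/-- The triangular region `T` of side length `n`, oriented with a vertical right edge:
column `x` (for `1 ≤ x ≤ n`) consists of the `x` vertices `(x, y)` with `1 - x ≤ y ≤ 0`.
It has `n (n+1) / 2` vertices, `n` on each side. -/
def Tset (n : ℕ) : Set (ℤ × ℤ) :=
  {p | 1 ≤ p.1 ∧ p.1 ≤ (n : ℤ) ∧ 1 - p.1 ≤ p.2 ∧ p.2 ≤ 0}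

/-- The neighborhood `N(v)` of a vertex of the triangular lattice. -/
def nbhd (v : ℤ × ℤ) : Set (ℤ × ℤ) := {w | TriLattice.Adj v w}

/-- The boundary `bd(T)`: vertices of `T` adjacent to some vertex outside `T`. -/
def bdT (n : ℕ) : Set (ℤ × ℤ) :=
  {v ∈ Tset n | ∃ w, TriLattice.Adj v w ∧ w ∉ Tset n}

/-- A corner of `T`: a vertex of `T` with exactly two neighbors in `T`. -/
def IsCorner (n : ℕ) (v : ℤ × ℤ) : Prop :=
  v ∈ Tset n ∧ (nbhd v ∩ Tset n).ncard = 2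

/-- The subgraph of `G_Δ` induced on `S` is connected. -/
def ConnSet (S : Set (ℤ × ℤ)) : Prop := (TriLattice.induce S).Connected

/-- A set of vertices is simply connected if it induces a connected subgraph of `G_Δ`
and its complement induces a connected subgraph of `G_Δ`. -/
def SimplyConn (S : Set (ℤ × ℤ)) : Prop := ConnSet S ∧ ConnSet Sᶜ

/-- A partition of `T` (of side length `n`) into three simply connected districts
`P 0`, `P 1`, `P 2` (the paper's `P_1, P_2, P_3`). -/
structure TriPartition (n : ℕ) where
  P : Fin 3 → Set (ℤ × ℤ)
  disj : ∀ i j : Fin 3, i ≠ j → Disjoint (P i) (P j)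
  cover : (⋃ i, P i) = Tset n
  sc : ∀ i, SimplyConn (P i)

/-- A recombination move: the two partitions differ, and some district of one is
identical to some district of the other. -/
def RecombMove {n : ℕ} (σ τ : TriPartition n) : Prop :=
  σ ≠ τ ∧ ∃ i j : Fin 3, σ.P i = τ.P j

/-- A partition is balanced (w.r.t. ideal sizes `k`) if `|P_i| = k_i` for each `i`. -/
def IsBalanced {n : ℕ} (k : Fin 3 → ℕ) (σ : TriPartition n) : Prop :=
  ∀ i, (σ.P i).ncard = k i

/-- `k_i - 1 ≤ |P_i| ≤ k_i + 1` for each `i`, i.e. balanced or nearly balanced. -/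
def InOmega {n : ℕ} (k : Fin 3 → ℕ) (σ : TriPartition n) : Prop :=
  ∀ i, k i ≤ (σ.P i).ncard + 1 ∧ (σ.P i).ncard ≤ k i + 1

/-- A partition is nearly balanced if it is not balanced but
`k_i - 1 ≤ |P_i| ≤ k_i + 1` for each `i`. -/
def NearlyBalanced {n : ℕ} (k : Fin 3 → ℕ) (σ : TriPartition n) : Prop :=
  ¬ IsBalanced k σ ∧ InOmega k σ

lemma IsBalanced.inOmega {n : ℕ} {k : Fin 3 → ℕ} {σ : TriPartition n}
    (h : IsBalanced k σ) : InOmega k σ := fun i => by have := h i; omega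

/-- The state space `Ω` of all balanced and nearly balanced partitions. -/
abbrev Omega (n : ℕ) (k : Fin 3 → ℕ) : Type := {σ : TriPartition n // InOmega k σ}

/-- The graph `G_Ω` on `Ω` whose edges are the recombination moves. -/
def GOmega (n : ℕ) (k : Fin 3 → ℕ) : SimpleGraph (Omega n k) where
  Adj σ τ := RecombMove σ.val τ.val
  symm := by
    constructor
    intro σ τ h
    obtain ⟨hne, i, j, hij⟩ := h
    exact ⟨Ne.symm hne, j, i, hij.symm⟩
  loopless := by
    constructor
    intro σ h
    obtain ⟨hne, -⟩ := h
    exact hne rfl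

/-- The columns of `T`: `colEq n i` is the `i`-th column `C_i` (vertices with first
coordinate `i`), and `colLT`, `colLE`, `colGT` are `C_{<i}`, `C_{≤i}`, `C_{>i}`. -/
def colEq (n i : ℕ) : Set (ℤ × ℤ) := {p ∈ Tset n | p.1 = (i : ℤ)}

def colLT (n i : ℕ) : Set (ℤ × ℤ) := {p ∈ Tset n | p.1 < (i : ℤ)}

def colLE (n i : ℕ) : Set (ℤ × ℤ) := {p ∈ Tset n | p.1 ≤ (i : ℤ)}

def colGT (n i : ℕ) : Set (ℤ × ℤ) := {p ∈ Tset n | (i : ℤ) < p.1}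

/-- The single leftmost vertex `C_1` of `T`. -/
def c1 : ℤ × ℤ := (1, 0)

/-- A vertex of `P_i` is exposed if it is adjacent to a vertex of `T` in another district. -/
def Exposed {n : ℕ} (σ : TriPartition n) (i : Fin 3) (v : ℤ × ℤ) : Prop :=
  v ∈ σ.P i ∧ ∃ w ∈ Tset n, TriLattice.Adj v w ∧ w ∉ σ.P i

/-- `S` is a connected component of `A`: a nonempty maximal connected subset of `A`. -/
def IsCompOf (S A : Set (ℤ × ℤ)) : Prop :=
  S.Nonempty ∧ S ⊆ A ∧ ConnSet S ∧ ∀ S', S ⊆ S' → S' ⊆ A → ConnSet S' → S' = S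

/-- Reassigning the vertex `v` to district `j` (removing it from the other districts)
yields again a partition of `T` into three simply connected districts. -/
def FlipTo {n : ℕ} (σ : TriPartition n) (v : ℤ × ℤ) (j : Fin 3) : Prop :=
  ∃ τ : TriPartition n, τ.P j = σ.P j ∪ {v} ∧ ∀ l, l ≠ j → τ.P l = σ.P l \ {v}

/-- `τ` is obtained from `σ` by reassigning the single vertex `v` to a new district. -/
def FlipMove {n : ℕ} (σ τ : TriPartition n) (v : ℤ × ℤ) : Prop :=
  ∃ j : Fin 3, v ∉ σ.P j ∧ τ.P j = σ.P j ∪ {v} ∧ ∀ l, l ≠ j → τ.P l = σ.P l \ {v}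

/-- A subset `S` of `P_i` is shrinkable if it contains a vertex that can be removed
from `P_i` and added to a different district, producing a valid partition. -/
def Shrinkable {n : ℕ} (σ : TriPartition n) (i : Fin 3) (S : Set (ℤ × ℤ)) : Prop :=
  ∃ x ∈ S, ∃ j : Fin 3, j ≠ i ∧ FlipTo σ x j

/-- The six unit directions of the triangular lattice. -/
def triDir (d : ℤ × ℤ) : Prop :=
  d = (1, 0) ∨ d = (-1, 0) ∨ d = (0, 1) ∨ d = (0, -1) ∨ d = (1, -1) ∨ d = (-1, 1)

/-- The `l`-th vertex (1-indexed) on the lattice line through `base` with direction `dir`. -/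
def towerVtx (base dir : ℤ × ℤ) (l : ℕ) : ℤ × ℤ := base + ((l : ℤ) - 1) • dir

/-- A tower for the partition `σ`: a sequence `v_1, …, v_t` (`t ≥ 2`) of consecutive
vertices on a straight lattice line such that `v_1` is in the same district as both common
neighbors of `v_1` and `v_2`; no two consecutive tower vertices are in the same district;
for `2 ≤ l ≤ t`, moving `v_l` to the district of `v_{l-1}` does not yield a valid
partition; and the next vertex `v_{t+1}` on the line cannot be appended to the tower. -/
structure Tower (n : ℕ) (σ : TriPartition n) where
  t : ℕ
  base : ℤ × ℤ
  dir : ℤ × ℤ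
  dst : ℕ → Fin 3
  two_le : 2 ≤ t
  dir_mem : triDir dir
  mem : ∀ l, 1 ≤ l → l ≤ t → towerVtx base dir l ∈ σ.P (dst l)
  top : ∀ u, TriLattice.Adj u (towerVtx base dir 1) →
      TriLattice.Adj u (towerVtx base dir 2) → u ∈ σ.P (dst 1)
  alt : ∀ l, 1 ≤ l → l < t → dst l ≠ dst (l + 1)
  stuck : ∀ l, 2 ≤ l → l ≤ t → ¬ FlipTo σ (towerVtx base dir l) (dst (l - 1))
  maximal : ¬ ∃ c : Fin 3, towerVtx base dir (t + 1) ∈ σ.P c ∧ c ≠ dst t ∧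
      ¬ FlipTo σ (towerVtx base dir (t + 1)) (dst t)

/-- A parametrization of the boundary cycle of `T` (of side length `n`), of period
`3(n-1)`: it runs along the top edge, then the right vertical edge, then the hypotenuse. -/
def bdCycleFun (n : ℕ) (t : ℤ) : ℤ × ℤ :=
  let m : ℤ := 3 * ((n : ℤ) - 1)
  let s : ℤ := t % m
  if s < (n : ℤ) - 1 then (1 + s, 0)
  else if s < 2 * ((n : ℤ) - 1) then ((n : ℤ), ((n : ℤ) - 1) - s)
  else (3 * ((n : ℤ) - 1) + 1 - s, 1 - (3 * ((n : ℤ) - 1) + 1 - s))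

/-- A vertex is enclosed by (the vertex set of) a cycle `C` if it is not on `C` and the set
of vertices reachable from it in the lattice avoiding `C` is finite, i.e. it lies in the
bounded region of the plane determined by `C`. -/
def Enclosed (C : Set (ℤ × ℤ)) (u : ℤ × ℤ) : Prop :=
  ∃ hu : u ∈ Cᶜ,
    {w : ℤ × ℤ | ∃ hw : w ∈ Cᶜ, (TriLattice.induce Cᶜ).Reachable ⟨u, hu⟩ ⟨w, hw⟩}.Finite

/-- `N_C(y)`: the neighbors of `y` lying on or inside the cycle with vertex set `C`. -/
def cycNbhd (C : Set (ℤ × ℤ)) (y : ℤ × ℤ) : Set (ℤ × ℤ) :=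
  {w | TriLattice.Adj y w ∧ (w ∈ C ∨ Enclosed C w)}

/-- A triangular face: three mutually adjacent vertices. -/
def TriFace (a b c : ℤ × ℤ) : Prop :=
  TriLattice.Adj a b ∧ TriLattice.Adj b c ∧ TriLattice.Adj a c

/-- Twice the signed area of the triangle `a b c`; its sign gives the orientation
(clockwise vs. counterclockwise) of the triple in the planar embedding. -/
def detOr (a b c : ℤ × ℤ) : ℤ :=
  (b.1 - a.1) * (c.2 - a.2) - (b.2 - a.2) * (c.1 - a.1)

end Redistrict

/-!
Deleting `v` from `S` keeps `S` connected because a path through `v` can be rerouted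
inside the connected set of neighbours of `v` in `S`. A vertex of the triangular lattice
has six neighbours, so if at most five of them lie in `S`, one lies in the complement;
then `v` is attached to the connected complement by an edge, and the complement grows
by `v` without losing connectivity.
-/

namespace SimpleGraph

variable {V : Type*} {G : SimpleGraph V} {S : Set V} {v : V}

lemma reachable_induce_diff_singleton_of_walk
    (hN : (G.induce (G.neighborSet v ∩ S)).Preconnected) {a b : S}
    (p : (G.induce S).Walk a b) (hb : G.Adj v b) (ha : a.1 ≠ v) :
    (G.induce (S \ {v})).Reachable ⟨a, a.2, ha⟩ ⟨b, b.2, hb.ne'⟩ := by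
  have hsub : G.neighborSet v ∩ S ⊆ S \ {v} := fun w hw => ⟨hw.2, hw.1.ne'⟩
  induction p with
  | nil => rfl
  | @cons a u b hau q ih =>
    by_cases hu : u.1 = v
    · have hva : G.Adj v a := hu ▸ hau.symm
      exact (hN ⟨a, hva, a.2⟩ ⟨b, hb, b.2⟩).map (induceHomOfLE G hsub).toHom
    · have hau' : (G.induce (S \ {v})).Adj ⟨a, a.2, ha⟩ ⟨u, u.2, hu⟩ := hau
      exact hau'.reachable.trans (ih hb hu)

theorem Connected.induce_diff_singleton (hS : (G.induce S).Connected)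
    (hN : (G.induce (G.neighborSet v ∩ S)).Connected) :
    (G.induce (S \ {v})).Connected := by
  obtain ⟨⟨w, hvw, hwS⟩⟩ := hN.nonempty
  rw [connected_iff_exists_forall_reachable]
  refine ⟨⟨w, hwS, hvw.ne'⟩, fun ⟨x, hxS, hxv⟩ => ?_⟩
  obtain ⟨p⟩ := hS.preconnected ⟨w, hwS⟩ ⟨x, hxS⟩
  exact (reachable_induce_diff_singleton_of_walk hN.preconnected p.reverse hvw hxv).symm

theorem Connected.induce_insert_of_adj (hS : (G.induce S).Connected) {w : V} (hw : w ∈ S)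
    (hvw : G.Adj v w) : (G.induce (insert v S)).Connected := by
  rw [Set.insert_eq, Set.union_comm]
  exact connected_induce_union hS.preconnected .of_subsingleton hw rfl hvw.symm

end SimpleGraph

namespace Redistrict

lemma adj_iff_triDir {v w : ℤ × ℤ} : TriLattice.Adj v w ↔ triDir (w - v) := by
  obtain ⟨a, b⟩ := v
  obtain ⟨c, d⟩ := w
  simp only [TriLattice, SimpleGraph.fromRel_adj, triDir, ne_eq, Prod.mk_sub_mk,
    Prod.mk.injEq]
  omega

lemma ncard_nbhd (v : ℤ × ℤ) : (nbhd v).ncard = 6 := by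
  have hnbhd : nbhd v = (v + ·) ''
      ↑({(1, 0), (-1, 0), (0, 1), (0, -1), (1, -1), (-1, 1)} : Finset (ℤ × ℤ)) := by
    ext w
    simp only [nbhd, Set.mem_ofPred_eq, adj_iff_triDir, triDir, Set.mem_image, Finset.coe_insert,
      Finset.coe_singleton, Set.mem_insert_iff, Set.mem_singleton_iff]
    constructor
    · intro h
      exact ⟨w - v, h, add_sub_cancel v w⟩
    · rintro ⟨d, hd, rfl⟩
      simpa using hd
  rw [hnbhd, Set.ncard_image_of_injective _ (add_right_injective v), Set.ncard_coe_finset]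
  rfl

lemma exists_adj_notMem_of_ncard_nbhd_inter_le_five {S : Set (ℤ × ℤ)} {v : ℤ × ℤ}
    (hcard : (nbhd v ∩ S).ncard ≤ 5) : ∃ w, TriLattice.Adj v w ∧ w ∉ S := by
  by_contra! hsub
  rw [Set.inter_eq_left.mpr (show nbhd v ⊆ S from hsub), ncard_nbhd] at hcard
  omega

theorem SimplyConn.diff_singleton {S : Set (ℤ × ℤ)} {v : ℤ × ℤ} (hS : SimplyConn S)
    (hconn : ConnSet (nbhd v ∩ S)) (hcard : (nbhd v ∩ S).ncard ≤ 5) :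
    SimplyConn (S \ {v}) := by
  obtain ⟨w, hvw, hw⟩ := exists_adj_notMem_of_ncard_nbhd_inter_le_five hcard
  refine ⟨hS.1.induce_diff_singleton hconn, ?_⟩
  rw [Set.compl_sdiff, ← Set.insert_eq]
  exact hS.2.induce_insert_of_adj hw hvw

theorem remove_vertex_simplyConnected_general (n : ℕ) (σ : TriPartition n) (i : Fin 3)
    (v : ℤ × ℤ)
    (hconn : ConnSet (nbhd v ∩ σ.P i))
    (hcard : (nbhd v ∩ σ.P i).ncard ≤ 5) :
    SimplyConn (σ.P i \ {v}) :=
  (σ.sc i).diff_singleton hconn hcard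

/-- Lemma 3.3: if `v ∈ P_i` has a connected `i`-neighborhood of size at most `5`, then
`P_i \ {v}` is simply connected. -/
theorem remove_vertex_simplyConnected (n : ℕ) (σ : TriPartition n) (i : Fin 3)
    (v : ℤ × ℤ) (hv : v ∈ σ.P i)
    (hconn : ConnSet (nbhd v ∩ σ.P i))
    (hcard : (nbhd v ∩ σ.P i).ncard ≤ 5) :
    SimplyConn (σ.P i \ {v}) :=
  remove_vertex_simplyConnected_general n σ i v hconn hcard

end Redistrict
end

section
/- (Flip Lemma) Let P be a partition of T into three simply connected districts, let v ∈ P_i, and let j ≠ i be such that v is adjacent to some vertex of P_j. If both the i-neighborhood and the j-neighborhood of v are connected, then the triple obtained from P by removing v from P_i and adding it to P_j is again a partition of T into three simply connected districts. -/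
/-!
Moving `v` from `P_i` to `P_j` changes each of `P_i`, `P_iᶜ`, `P_j`, `P_jᶜ` by the single
vertex `v`. Adding `v` next to a vertex already present (a neighbor `w ∈ P_j ⊆ P_iᶜ`) keeps a set
connected, and removing `v` keeps it connected as soon as the part of `N(v)` inside the set is
connected. For `P_i` this is the hypothesis; for `P_jᶜ` it follows from the hypothesis on `P_j`
because `N(v)` is a 6-cycle, in which the complement of a connected proper subset is connected.
-/

namespace SimpleGraph

variable {V W : Type*} {G : SimpleGraph V}

lemma connected_induce_insert {s : Set V} {v w : V} (hs : (G.induce s).Connected) (hw : w ∈ s)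
    (hvw : G.Adj v w) : (G.induce (insert v s)).Connected := by
  rw [← Set.union_singleton]
  exact connected_induce_union hs.preconnected Preconnected.of_subsingleton hw rfl hvw.symm

lemma connected_induce_diff_singleton {s : Set V} {v : V} (hs : (G.induce s).Connected)
    (hv : v ∈ s) (hN : (G.induce (G.neighborSet v ∩ s)).Connected) :
    (G.induce (s \ {v})).Connected := by
  have hNs : G.neighborSet v ∩ s ⊆ s \ {v} := fun w hw => ⟨hw.2, (G.ne_of_adj hw.1).symm⟩
  -- A walk in `s` ending at `v` enters `v` from a neighbor; its part before that avoids `v`.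
  have reach_nbhd : ∀ {a b : s} (p : (G.induce s).Walk a b), b.val = v → ∀ ha : a.val ≠ v,
      ∃ z, ∃ hz : z ∈ G.neighborSet v ∩ s,
        (G.induce (s \ {v})).Reachable ⟨z, hNs hz⟩ ⟨a, a.2, ha⟩ := by
    intro a b p
    induction p with
    | nil => intro hb ha; exact absurd hb ha
    | @cons a c b hac p ih =>
      intro hb ha
      by_cases hc : c.val = v
      · exact ⟨a, ⟨hc ▸ hac.symm, a.2⟩, .rfl⟩
      · obtain ⟨z, hz, hzc⟩ := ih hb hc
        exact ⟨z, hz, hzc.trans (Adj.reachable (induce_adj.2 (induce_adj.1 hac).symm))⟩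
  obtain ⟨⟨u, hu⟩⟩ := hN.nonempty
  rw [connected_iff_exists_forall_reachable]
  refine ⟨⟨u, hNs hu⟩, fun ⟨x, hx⟩ => ?_⟩
  obtain ⟨p⟩ := hs.preconnected ⟨x, hx.1⟩ ⟨v, hv⟩
  obtain ⟨z, hz, hzx⟩ := reach_nbhd p rfl hx.2
  exact ((hN.preconnected ⟨u, hu⟩ ⟨z, hz⟩).map (G.induceHomOfLE hNs).toHom).trans hzx

lemma Embedding.connected_induce_image_iff {H : SimpleGraph W} (φ : H ↪g G) (A : Set W) :
    (G.induce (φ '' A)).Connected ↔ (H.induce A).Connected :=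
  (show H.induce A ≃g G.induce (φ '' A) from
    { Equiv.Set.image φ A φ.injective with map_rel_iff' := by simp }).connected_iff.symm

lemma cycleGraph_six_connected_induce_compl {A : Finset (Fin 6)}
    (hA : ((cycleGraph 6).induce (A : Set (Fin 6))).Connected) (hAc : Aᶜ.Nonempty) :
    ((cycleGraph 6).induce ((Aᶜ : Finset (Fin 6)) : Set (Fin 6))).Connected := by
  revert A
  decide +kernel

end SimpleGraph

namespace Redistrict

open SimpleGraph

def hexDir : Fin 6 → ℤ × ℤ := ![(1, 0), (0, 1), (-1, 1), (-1, 0), (0, -1), (1, -1)]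

lemma hexDir_injective : Function.Injective hexDir := by decide

lemma triLattice_adj_add_iff (v d e : ℤ × ℤ) :
    TriLattice.Adj (v + d) (v + e) ↔ TriLattice.Adj d e := by
  simp [TriLattice, add_sub_add_left_eq_sub]

lemma triLattice_adj_zero_iff (d : ℤ × ℤ) : TriLattice.Adj 0 d ↔ d ∈ Set.range hexDir := by
  obtain ⟨a, b⟩ := d
  simp only [TriLattice, fromRel_adj, Set.mem_range, Fin.exists_fin_succ, IsEmpty.exists_iff,
    or_false, hexDir, Matrix.cons_val_zero, Matrix.cons_val_succ, Prod.ext_iff, Prod.fst_zero,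
    Prod.snd_zero, Prod.fst_sub, Prod.snd_sub, ne_eq]
  omega

def hexagon (v : ℤ × ℤ) : cycleGraph 6 ↪g TriLattice where
  toFun k := v + hexDir k
  inj' _ _ h := hexDir_injective (add_left_cancel h)
  map_rel_iff' {k l} := by
    change TriLattice.Adj (v + hexDir k) (v + hexDir l) ↔ _
    rw [triLattice_adj_add_iff]
    revert k l
    simp only [TriLattice, fromRel_adj]
    decide

lemma range_hexagon (v : ℤ × ℤ) : Set.range (hexagon v) = nbhd v := by
  ext w
  have hw : TriLattice.Adj v w ↔ TriLattice.Adj (v + 0) (v + (w - v)) := by simp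
  rw [nbhd, Set.mem_ofPred_eq, hw, triLattice_adj_add_iff, triLattice_adj_zero_iff]
  simp only [Set.mem_range, eq_sub_iff_add_eq']
  rfl

lemma connSet_nbhd_inter_compl {v : ℤ × ℤ} {S : Set (ℤ × ℤ)} (hS : ConnSet (nbhd v ∩ S))
    (hne : (nbhd v ∩ Sᶜ).Nonempty) : ConnSet (nbhd v ∩ Sᶜ) := by
  classical
  have nbhd_inter : ∀ T, nbhd v ∩ T = hexagon v '' (hexagon v ⁻¹' T) := fun T => by
    rw [Set.image_preimage_eq_range_inter, range_hexagon]
  set A := (hexagon v ⁻¹' S).toFinset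
  have hA : ((Aᶜ : Finset (Fin 6)) : Set (Fin 6)) = hexagon v ⁻¹' Sᶜ := by
    rw [Finset.coe_compl, Set.coe_toFinset, Set.preimage_compl]
  rw [ConnSet, nbhd_inter, Embedding.connected_induce_image_iff] at hS ⊢
  rw [← hA]
  refine cycleGraph_six_connected_induce_compl (by rwa [Set.coe_toFinset]) ?_
  obtain ⟨w, hw⟩ := hne
  rw [nbhd_inter, ← hA] at hw
  obtain ⟨k, hk, -⟩ := hw
  exact ⟨k, hk⟩

lemma SimplyConn.compl {S : Set (ℤ × ℤ)} (hS : SimplyConn S) : SimplyConn Sᶜ :=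
  ⟨hS.2, by rw [ConnSet, compl_compl]; exact hS.1⟩

lemma SimplyConn.diff_singleton_s5 {S : Set (ℤ × ℤ)} {v w : ℤ × ℤ} (hS : SimplyConn S)
    (hv : v ∈ S) (hN : ConnSet (nbhd v ∩ S)) (hw : w ∉ S) (hvw : TriLattice.Adj v w) :
    SimplyConn (S \ {v}) := by
  refine ⟨connected_induce_diff_singleton hS.1 hv hN, ?_⟩
  rw [ConnSet, Set.compl_sdiff, Set.singleton_union]
  exact connected_induce_insert hS.2 hw hvw

lemma SimplyConn.union_singleton {S : Set (ℤ × ℤ)} {v w : ℤ × ℤ} (hS : SimplyConn S)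
    (hv : v ∉ S) (hN : ConnSet (nbhd v ∩ Sᶜ)) (hw : w ∈ S) (hvw : TriLattice.Adj v w) :
    SimplyConn (S ∪ {v}) := by
  have h := (hS.compl.diff_singleton_s5 hv hN (not_not_intro hw) hvw).compl
  rwa [Set.compl_sdiff, compl_compl, Set.union_comm] at h

lemma flipTo_of_simplyConn {n : ℕ} {σ : TriPartition n} {v : ℤ × ℤ} {j : Fin 3}
    (hvT : v ∈ Tset n) (hj : SimplyConn (σ.P j ∪ {v}))
    (hothers : ∀ l, l ≠ j → SimplyConn (σ.P l \ {v})) : FlipTo σ v j := by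
  classical
  let Q : Fin 3 → Set (ℤ × ℤ) := fun l => if l = j then σ.P j ∪ {v} else σ.P l \ {v}
  have mem_Q : ∀ l x, x ∈ Q l ↔ x = v ∧ l = j ∨ x ≠ v ∧ x ∈ σ.P l := by
    intro l x
    by_cases hl : l = j <;> by_cases hx : x = v <;> simp [Q, hl, hx]
  refine ⟨⟨Q, fun a b hab => Set.disjoint_left.2 fun x ha hb => ?_, ?_, fun l => ?_⟩,
    if_pos rfl, fun l hl => if_neg hl⟩
  · rw [mem_Q] at ha hb
    rcases ha with ⟨rfl, rfl⟩ | ⟨hxv, ha⟩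
    · rcases hb with ⟨-, rfl⟩ | ⟨hxv, -⟩
      exacts [hab rfl, hxv rfl]
    · rcases hb with ⟨rfl, -⟩ | ⟨-, hb⟩
      exacts [hxv rfl, Set.disjoint_left.1 (σ.disj a b hab) ha hb]
  · ext x
    rw [← σ.cover] at hvT ⊢
    simp only [Set.mem_iUnion, mem_Q]
    by_cases hx : x = v
    · subst hx; simpa using hvT
    · simp [hx]
  · by_cases hlj : l = j
    · subst hlj; simpa [Q] using hj
    · simpa [Q, hlj] using hothers l hlj

/-- **Flip Lemma** (Lemma 3.7): if `v ∈ P_i` is adjacent to a vertex of `P_j` (`j ≠ i`)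
and both the `i`-neighborhood and the `j`-neighborhood of `v` are connected, then removing
`v` from `P_i` and adding it to `P_j` yields again a partition of `T` into three simply
connected districts. -/
theorem flip_lemma (n : ℕ) (σ : TriPartition n) (i j : Fin 3) (v : ℤ × ℤ)
    (hv : v ∈ σ.P i) (hij : j ≠ i)
    (hadj : ∃ w ∈ σ.P j, TriLattice.Adj v w)
    (hci : ConnSet (nbhd v ∩ σ.P i)) (hcj : ConnSet (nbhd v ∩ σ.P j)) :
    FlipTo σ v j := by
  obtain ⟨w, hwj, hvw⟩ := hadj
  have hji : Disjoint (σ.P j) (σ.P i) := σ.disj j i hij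
  have hvj : v ∉ σ.P j := fun h => hji.notMem_of_mem_left h hv
  have hNj : ConnSet (nbhd v ∩ (σ.P j)ᶜ) := by
    obtain ⟨⟨u, hu, hui⟩⟩ := hci.nonempty
    exact connSet_nbhd_inter_compl hcj ⟨u, hu, fun huj => hji.notMem_of_mem_left huj hui⟩
  have hvT : v ∈ Tset n := σ.cover ▸ Set.mem_iUnion.2 ⟨i, hv⟩
  refine flipTo_of_simplyConn hvT ((σ.sc j).union_singleton hvj hNj hwj hvw) fun l _ => ?_
  by_cases hli : l = i
  · subst hli
    exact (σ.sc l).diff_singleton_s5 hv hci (hji.notMem_of_mem_left hwj) hvw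
  · have hvl : v ∉ σ.P l := (σ.disj i l (Ne.symm hli)).notMem_of_mem_left hv
    rw [Set.sdiff_singleton_eq_self hvl]
    exact σ.sc l

end Redistrict
end

section
/- Let P be a partition of T into three simply connected districts, let W ⊆ P_i be a simply connected subset of P_i, and let S be a connected component of P_i \ W containing at least one exposed vertex. Then S contains an exposed vertex x such that P_i \ {x} is simply connected. -/
namespace SimpleGraph

variable {V : Type*} {G : SimpleGraph V} {A C K P S T W : Set V} {a b c p w x y z : V}

/-- The connected component of `a` in `G.induce A`, as a set of vertices of `G`; it is empty
when `a ∉ A`. -/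
def componentIn (G : SimpleGraph V) (A : Set V) (a : V) : Set V :=
  ⋃₀ {C | C ⊆ A ∧ a ∈ C ∧ (G.induce C).Connected}

lemma subset_componentIn (hCA : C ⊆ A) (ha : a ∈ C) (hC : (G.induce C).Connected) :
    C ⊆ G.componentIn A a :=
  Set.subset_sUnion_of_mem ⟨hCA, ha, hC⟩

lemma componentIn_subset : G.componentIn A a ⊆ A :=
  Set.sUnion_subset fun _ hC => hC.1

lemma mem_of_mem_componentIn (hb : b ∈ G.componentIn A a) : a ∈ A := by
  obtain ⟨C, ⟨hCA, haC, -⟩, -⟩ := hb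
  exact hCA haC

lemma connected_induce_singleton (a : V) : (G.induce {a}).Connected :=
  connected_iff _ |>.2 ⟨.of_subsingleton, ⟨⟨a, rfl⟩⟩⟩

lemma mem_componentIn_self (ha : a ∈ A) : a ∈ G.componentIn A a :=
  subset_componentIn (Set.singleton_subset_iff.2 ha) rfl (connected_induce_singleton a) rfl

lemma connected_componentIn (ha : a ∈ A) : (G.induce (G.componentIn A a)).Connected :=
  induce_sUnion_connected_of_pairwise_not_disjoint
    ⟨{a}, Set.singleton_subset_iff.2 ha, rfl, connected_induce_singleton a⟩
    (fun hC hC' => ⟨a, hC.2.1, hC'.2.1⟩) (fun hC => hC.2.2)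

lemma mem_componentIn_of_adj (hb : b ∈ G.componentIn A a) (hc : c ∈ A) (hbc : G.Adj b c) :
    c ∈ G.componentIn A a := by
  have ha := mem_of_mem_componentIn hb
  have hconn : (G.induce (G.componentIn A a ∪ {b, c})).Connected :=
    induce_union_connected (connected_componentIn ha).preconnected
      (induce_pair_connected_of_adj hbc).preconnected ⟨b, hb, by simp⟩
  have hsub : G.componentIn A a ∪ {b, c} ⊆ A :=
    Set.union_subset componentIn_subset (Set.pair_subset (componentIn_subset hb) hc)
  exact subset_componentIn hsub (.inl (mem_componentIn_self ha)) hconn (.inr (by simp))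

lemma componentIn_eq_of_mem (hb : b ∈ G.componentIn A a) :
    G.componentIn A b = G.componentIn A a := by
  have grow : ∀ {a b}, b ∈ G.componentIn A a → G.componentIn A a ⊆ G.componentIn A b :=
    fun hb => subset_componentIn componentIn_subset hb
      (connected_componentIn (mem_of_mem_componentIn hb))
  exact (grow (grow hb (mem_componentIn_self (mem_of_mem_componentIn hb)))).antisymm (grow hb)

lemma disjoint_componentIn (hb : b ∉ G.componentIn A a) :
    Disjoint (G.componentIn A a) (G.componentIn A b) := by
  refine Set.disjoint_left.2 fun u hua hub => hb ?_
  rw [← componentIn_eq_of_mem hua, componentIn_eq_of_mem hub]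
  exact mem_componentIn_self (mem_of_mem_componentIn hub)

lemma preconnected_induce_iff_forall_mem_componentIn :
    (G.induce A).Preconnected ↔ ∀ a ∈ A, ∀ b ∈ A, b ∈ G.componentIn A a := by
  refine ⟨fun hA a ha b hb => ?_, fun h u v => ?_⟩
  · exact subset_componentIn subset_rfl ha (connected_iff _ |>.2 ⟨hA, ⟨⟨a, ha⟩⟩⟩) hb
  · have hC := connected_componentIn (G := G) u.2
    exact (hC ⟨u, mem_componentIn_self u.2⟩ ⟨v, h u u.2 v v.2⟩).map
      (G.induceHomOfLE componentIn_subset).toHom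

lemma preconnected_induce_of_forall_exists_adj_lt (r : V) (f : V → ℕ)
    (h : ∀ v ∈ A, v ≠ r → ∃ u ∈ A, G.Adj v u ∧ f u < f v) : (G.induce A).Preconnected := by
  have reach : ∀ k, ∀ v ∈ A, f v = k → v ∈ G.componentIn A r := by
    intro k
    induction k using Nat.strong_induction_on with
    | _ k ih =>
      intro v hv hvk
      by_cases hvr : v = r
      · exact hvr ▸ mem_componentIn_self hv
      obtain ⟨u, hu, hvu, hlt⟩ := h v hv hvr
      exact mem_componentIn_of_adj (ih _ (hvk ▸ hlt) u hu rfl) hv hvu.symm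
  refine preconnected_induce_iff_forall_mem_componentIn.2 fun a ha b hb => ?_
  rw [componentIn_eq_of_mem (reach _ a ha rfl)]
  exact reach _ b hb rfl

lemma exists_adj_mem_diff_of_preconnected (hA : (G.induce A).Preconnected) (ha : a ∈ A)
    (haK : a ∈ K) (hb : b ∈ A) (hbK : b ∉ K) : ∃ u ∈ K, ∃ v ∈ A \ K, G.Adj u v := by
  obtain ⟨p⟩ := hA ⟨a, ha⟩ ⟨b, hb⟩
  obtain ⟨d, -, hd₁, hd₂⟩ := p.exists_boundary_dart {v | v.1 ∈ K} haK hbK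
  exact ⟨d.fst, hd₁, d.snd, ⟨d.snd.2, hd₂⟩, d.adj⟩

lemma exists_adj_mem_componentIn_diff_singleton (hP : (G.induce P).Preconnected)
    (ha : a ∈ P \ {x}) (hb : b ∈ P) (hbK : b ∉ G.componentIn (P \ {x}) a) :
    ∃ u ∈ G.componentIn (P \ {x}) a, G.Adj u x := by
  obtain ⟨u, hu, v, ⟨hvP, hvK⟩, huv⟩ :=
    exists_adj_mem_diff_of_preconnected hP ha.1 (mem_componentIn_self ha) hb hbK
  obtain rfl : v = x := by
    by_contra hvx
    exact hvK (mem_componentIn_of_adj hu ⟨hvP, hvx⟩ huv)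
  exact ⟨u, hu, huv⟩

lemma componentIn_diff_singleton_ssubset (hP : (G.induce P).Preconnected) (ha : a ∈ P \ {x})
    (hxP : x ∈ P) (hy : y ∈ P) (hyx : y ≠ x) (hyC : y ∉ G.componentIn (P \ {x}) a) :
    G.componentIn (P \ {x}) a ⊂ G.componentIn (P \ {y}) a := by
  have hsub : G.componentIn (P \ {x}) a ⊆ G.componentIn (P \ {y}) a := by
    refine subset_componentIn (fun v hv => ⟨(componentIn_subset hv).1, ?_⟩)
      (mem_componentIn_self ha) (connected_componentIn ha)
    rintro rfl
    exact hyC hv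
  have hxC : x ∉ G.componentIn (P \ {x}) a := fun h => (componentIn_subset h).2 rfl
  obtain ⟨u, hu, hux⟩ := exists_adj_mem_componentIn_diff_singleton hP ha hxP hxC
  exact hsub.ssubset_of_not_subset fun h =>
    hxC (h (mem_componentIn_of_adj (hsub hu) ⟨hxP, hyx.symm⟩ hux))

lemma componentIn_diff_singleton_subset_of_maximal (hP : (G.induce P).Preconnected)
    (hWP : W ⊆ P) (hW : (G.induce W).Connected) (hw : a ∈ W)
    (hS : Maximal (fun C => C ⊆ P \ W ∧ (G.induce C).Connected) S) (hxS : x ∈ S)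
    (hz : z ∈ P \ {x}) (hzC : z ∉ G.componentIn (P \ {x}) a) :
    G.componentIn (P \ {x}) z ⊆ S := by
  have hxW : x ∉ W := (hS.1.1 hxS).2
  have hWx : W ⊆ P \ {x} := fun v hv => ⟨hWP hv, by rintro rfl; exact hxW hv⟩
  have hWC : W ⊆ G.componentIn (P \ {x}) a := subset_componentIn hWx hw hW
  have hdisj := disjoint_componentIn hzC
  obtain ⟨u, hu, hux⟩ := exists_adj_mem_componentIn_diff_singleton hP hz (hWP hw)
    (Set.disjoint_left.1 hdisj (hWC hw))
  have hKW : G.componentIn (P \ {x}) z ⊆ P \ W := fun v hv =>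
    ⟨(componentIn_subset hv).1, fun hvW => Set.disjoint_right.1 hdisj hv (hWC hvW)⟩
  have hconn : (G.induce (S ∪ G.componentIn (P \ {x}) z)).Connected :=
    connected_induce_union hS.1.2.preconnected (connected_componentIn hz).preconnected hxS hu
      hux.symm
  exact Set.union_subset_iff.1 (hS.2 ⟨Set.union_subset hS.1.1 hKW, hconn⟩ Set.subset_union_left)
    |>.2

lemma exists_exposed_mem_componentIn (hT : (G.induce (T \ {x})).Preconnected)
    (hPT : P ⊆ T) (hp : p ∈ T) (hpP : p ∉ P) (hxP : x ∈ P) (hz : z ∈ P \ {x}) :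
    ∃ u ∈ G.componentIn (P \ {x}) z, ∃ w ∈ T, G.Adj u w ∧ w ∉ P := by
  have hpK : p ∉ G.componentIn (P \ {x}) z := fun h => hpP (componentIn_subset h).1
  obtain ⟨u, hu, v, ⟨⟨hvT, hvx⟩, hvK⟩, huv⟩ := exists_adj_mem_diff_of_preconnected hT
    ⟨hPT hz.1, hz.2⟩ (mem_componentIn_self hz) ⟨hp, by rintro rfl; exact hpP hxP⟩ hpK
  refine ⟨u, hu, v, hvT, huv, fun hvP => hvK ?_⟩
  exact mem_componentIn_of_adj hu ⟨hvP, hvx⟩ huv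

theorem exists_exposed_connected_induce_diff_singleton
    (hT : ∀ x ∈ P, (G.induce (T \ {x})).Preconnected) (hPT : P ⊆ T) (hPfin : P.Finite)
    (hP : (G.induce P).Preconnected) (hWP : W ⊆ P) (hW : (G.induce W).Connected)
    (hS : Maximal (fun C => C ⊆ P \ W ∧ (G.induce C).Connected) S)
    (hexp : ∃ x ∈ S, ∃ w ∈ T, G.Adj x w ∧ w ∉ P) :
    ∃ x ∈ S, (∃ w ∈ T, G.Adj x w ∧ w ∉ P) ∧ (G.induce (P \ {x})).Connected := by
  obtain ⟨⟨w₀, hw₀⟩⟩ := hW.nonempty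
  let E := {x ∈ S | ∃ w ∈ T, G.Adj x w ∧ w ∉ P}
  have hEfin : E.Finite := hPfin.subset fun v hv => (hS.1.1 hv.1).1
  obtain ⟨x, ⟨hxS, hxE⟩, hmax⟩ :=
    Set.exists_max_image E (fun v => (G.componentIn (P \ {v}) w₀).ncard) hEfin hexp
  refine ⟨x, hxS, hxE, ?_⟩
  have hxP : x ∈ P := (hS.1.1 hxS).1
  have hw₀x : w₀ ∈ P \ {x} := ⟨hWP hw₀, by rintro rfl; exact (hS.1.1 hxS).2 hw₀⟩
  suffices h : P \ {x} ⊆ G.componentIn (P \ {x}) w₀ by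
    rw [← componentIn_subset.antisymm h]
    exact connected_componentIn hw₀x
  intro z hz
  by_contra hzC
  obtain ⟨_, hp, -, hpP⟩ := hxE
  obtain ⟨y, hyK, hyE⟩ := exists_exposed_mem_componentIn (hT x hxP) hPT hp hpP hxP hz
  have hyS := componentIn_diff_singleton_subset_of_maximal hP hWP hW hw₀ hS hxS hz hzC hyK
  have hyC : y ∉ G.componentIn (P \ {x}) w₀ :=
    Set.disjoint_right.1 (disjoint_componentIn hzC) hyK
  have hlt := componentIn_diff_singleton_ssubset hP hw₀x hxP (componentIn_subset hyK).1
    (componentIn_subset hyK).2 hyC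
  exact (hmax y ⟨hyS, hyE⟩).not_gt
    (Set.ncard_lt_ncard hlt (hPfin.subset (componentIn_subset.trans Set.sdiff_subset)))

lemma connected_induce_compl_diff_singleton (hP : (G.induce Pᶜ).Connected) (hw : w ∉ P)
    (hxw : G.Adj x w) : (G.induce (P \ {x})ᶜ).Connected := by
  rw [Set.compl_sdiff]
  exact connected_induce_union (connected_induce_singleton x).preconnected hP.preconnected rfl hw
    hxw

end SimpleGraph

namespace Redistrict

lemma triLattice_adj_iff {v w : ℤ × ℤ} : TriLattice.Adj v w ↔
    (w.1 - v.1 = 1 ∧ w.2 - v.2 = 0) ∨ (w.1 - v.1 = -1 ∧ w.2 - v.2 = 0) ∨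
    (w.1 - v.1 = 0 ∧ w.2 - v.2 = 1) ∨ (w.1 - v.1 = 0 ∧ w.2 - v.2 = -1) ∨
    (w.1 - v.1 = 1 ∧ w.2 - v.2 = -1) ∨ (w.1 - v.1 = -1 ∧ w.2 - v.2 = 1) := by
  simp only [TriLattice, SimpleGraph.fromRel_adj, ne_eq, Prod.ext_iff, Prod.fst_sub,
    Prod.snd_sub]
  omega

lemma Tset_finite (n : ℕ) : (Tset n).Finite :=
  (Set.finite_Icc ((1 : ℤ), 1 - (n : ℤ)) ((n : ℤ), 0)).subset fun p hp => by
    simp only [Tset, Set.mem_ofPred_eq] at hp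
    simp only [Set.mem_Icc, Prod.le_def]
    omega

lemma TriPartition.subset_Tset {n : ℕ} (σ : TriPartition n) (i : Fin 3) : σ.P i ⊆ Tset n :=
  σ.cover ▸ Set.subset_iUnion σ.P i

lemma preconnected_Tset_diff_singleton (n : ℕ) (x : ℤ × ℤ) :
    (TriLattice.induce (Tset n \ {x})).Preconnected := by
  obtain ⟨x₁, x₂⟩ := x
  have mem : ∀ {a b : ℤ}, (1 ≤ a ∧ a ≤ n ∧ 1 - a ≤ b ∧ b ≤ 0) → ¬(a = x₁ ∧ b = x₂) →
      (a, b) ∈ Tset n \ {(x₁, x₂)} :=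
    fun h hx => ⟨h, fun e => hx (Prod.mk.inj e)⟩
  -- If `x` lies in the last column, descend towards `c1` column by column; otherwise move
  -- right to the last column, which is intact, and then up it to `(n, 0)`.
  by_cases hx : x₁ = n
  · refine SimpleGraph.preconnected_induce_of_forall_exists_adj_lt c1 (fun v => v.1.toNat) ?_
    rintro ⟨a, b⟩ hv hvr
    simp only [Tset, c1, Set.mem_sdiff, Set.mem_ofPred_eq, Set.mem_singleton_iff, ne_eq,
      Prod.ext_iff] at hv hvr
    by_cases hb : 2 - a ≤ b
    · exact ⟨(a - 1, b), mem (by omega) (by omega), triLattice_adj_iff.2 (by omega), by omega⟩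
    · exact ⟨(a - 1, b + 1), mem (by omega) (by omega), triLattice_adj_iff.2 (by omega),
        by omega⟩
  · refine SimpleGraph.preconnected_induce_of_forall_exists_adj_lt ((n : ℤ), 0)
      (fun v => (2 * (n - v.1) - v.2).toNat) ?_
    rintro ⟨a, b⟩ hv hvr
    simp only [Tset, Set.mem_sdiff, Set.mem_ofPred_eq, Set.mem_singleton_iff, ne_eq,
      Prod.ext_iff] at hv hvr
    by_cases ha : a = n
    · exact ⟨(a, b + 1), mem (by omega) (by omega), triLattice_adj_iff.2 (by omega), by omega⟩
    by_cases hr : a + 1 = x₁ ∧ b = x₂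
    · exact ⟨(a + 1, b - 1), mem (by omega) (by omega), triLattice_adj_iff.2 (by omega),
        by omega⟩
    · exact ⟨(a + 1, b), mem (by omega) hr, triLattice_adj_iff.2 (by omega), by omega⟩

lemma IsCompOf.maximal {S A : Set (ℤ × ℤ)} (h : IsCompOf S A) :
    Maximal (fun C => C ⊆ A ∧ ConnSet C) S :=
  ⟨⟨h.2.1, h.2.2.1⟩, fun C hC hSC => (h.2.2.2 C hSC hC.1 hC.2).le⟩

/-- Lemma 3.8: if `W ⊆ P_i` is simply connected and `S` is a connected component of
`P_i \ W` containing an exposed vertex, then `S` contains an exposed vertex `x` such that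
`P_i \ {x}` is simply connected. -/
theorem component_has_removable_exposed (n : ℕ) (σ : TriPartition n) (i : Fin 3)
    (W S : Set (ℤ × ℤ)) (hW : W ⊆ σ.P i) (hWsc : SimplyConn W)
    (hS : IsCompOf S (σ.P i \ W))
    (hexp : ∃ x ∈ S, Exposed σ i x) :
    ∃ x ∈ S, Exposed σ i x ∧ SimplyConn (σ.P i \ {x}) := by
  have hPT := σ.subset_Tset i
  obtain ⟨x, hxS, hxexp, hconn⟩ := SimpleGraph.exists_exposed_connected_induce_diff_singleton
    (fun x _ => preconnected_Tset_diff_singleton n x) hPT ((Tset_finite n).subset hPT)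
    (σ.sc i).1.preconnected hW hWsc.1 hS.maximal
    (by obtain ⟨x, hxS, -, hx⟩ := hexp; exact ⟨x, hxS, hx⟩)
  refine ⟨x, hxS, ⟨(hS.2.1 hxS).1, hxexp⟩, hconn, ?_⟩
  obtain ⟨w, -, hxw, hwP⟩ := hxexp
  exact SimpleGraph.connected_induce_compl_diff_singleton (σ.sc i).2 hwP hxw

end Redistrict
end
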